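/- arXiv:2210.14856 — 2 statements merged into one kernel-verified Lean document; each statement's English description precedes it below -/
import Mathlib

section
/- Let S be an Arf numerical semigroup with multiplicity 4 and conductor s ≥ 4 with s ≡ 0 (mod 4), of the form S = ⟨4, s+1, s+2, s+3⟩. Then PF(S) = {s−3, s−2, s−1}; the unique RF-matrix of s−3 is the 4×4 matrix with rows (−1, 1, 0, 0), ((s−4)/4, −1, 1, 0), ((s−4)/4, 0, −1, 1), (s/2, 0, 0, −1); the unique RF-matrix of s−2 is the matrix with rows (−1, 0, 1, 0), ((s−4)/4, −1, 0, 1), (s/2, 0, −1, 0), (s/4, 1, 0, −1); and s−1 has exactly two RF-matrices, namely the matrices with rows (−1, 0, 0, 1), (s/2, −1, 0, 0), (s/4, 1, −1, 0) and fourth row either (s/4, 0, 1, −1) or (0, 2, 0, −1). -/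
/-- `S ⊆ ℕ` is a numerical semigroup: contains `0`, closed under addition,
and has finite complement in `ℕ`. -/
def IsNumericalSemigroup (S : Set ℕ) : Prop :=
  0 ∈ S ∧ (∀ a ∈ S, ∀ b ∈ S, a + b ∈ S) ∧ (Sᶜ).Finite

/-- `S` satisfies the Arf condition: for `x ≤ y` in `S`, `2y - x ∈ S`. -/
def IsArf (S : Set ℕ) : Prop :=
  ∀ x ∈ S, ∀ y ∈ S, x ≤ y → 2 * y - x ∈ S

/-- `m` is the multiplicity of `S`: the smallest nonzero element. -/
def HasMultiplicity (S : Set ℕ) (m : ℕ) : Prop :=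
  m ∈ S ∧ m ≠ 0 ∧ ∀ n ∈ S, n ≠ 0 → m ≤ n

/-- `s` is the conductor of `S`: the least `t` with `[t, ∞) ⊆ S`. -/
def HasConductor (S : Set ℕ) (s : ℕ) : Prop :=
  (∀ n, s ≤ n → n ∈ S) ∧ ∀ t, (∀ n, t ≤ n → n ∈ S) → s ≤ t

/-- The set of pseudo-Frobenius numbers of `S`. -/
def pseudoFrobeniusSet (S : Set ℕ) : Set ℕ :=
  {z | z ∉ S ∧ ∀ n ∈ S, n ≠ 0 → z + n ∈ S}

/-- `A` is a row-factorization (RF-) matrix of `f` with respect to generators `n`: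
diagonal entries are `-1`, off-diagonal entries are nonnegative, and every row
gives a representation of `f` in terms of the generators. -/
def IsRFMatrix {e : ℕ} (n : Fin e → ℕ) (f : ℤ) (A : Matrix (Fin e) (Fin e) ℤ) : Prop :=
  (∀ i, A i i = -1) ∧ (∀ i j, i ≠ j → 0 ≤ A i j) ∧
    (∀ i, f = ∑ j, A i j * (n j : ℤ))

/-! Write `s = 4k`. Every generator is a multiple of `4` or at least `4k`, and `S` contains
`4k, …, 4k+3` and is closed under adding `4`; hence `S = {n | 4 ∣ n ∨ s ≤ n}`, from which
`PF(S) = {s-3, s-2, s-1}` is read off.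

Adding `1` on the diagonal turns row `i` of an RF-matrix of `f` into a factorization of
`f + nᵢ ≤ 8k + 2`. An element that small is a multiple of `4` plus at most one of
`4k+1, 4k+2, 4k+3`, or plus `2(4k+1) = 8k+2`; so each row is determined by `f + nᵢ` modulo `4`,
except that `8k + 2 = 4k + (4k+2) = 2(4k+1)` gives the two choices for the last row when
`f = s - 1`. -/

theorem coe_closure_four_eq (k : ℕ) :
    (AddSubmonoid.closure ({4, 4 * k + 1, 4 * k + 2, 4 * k + 3} : Set ℕ) : Set ℕ) =
      {n | n % 4 = 0 ∨ 4 * k ≤ n} := by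
  set M := AddSubmonoid.closure ({4, 4 * k + 1, 4 * k + 2, 4 * k + 3} : Set ℕ)
  have hgen : ∀ x ∈ ({4, 4 * k + 1, 4 * k + 2, 4 * k + 3} : Set ℕ), x ∈ M :=
    fun x hx => AddSubmonoid.subset_closure hx
  have hmul : ∀ q, 4 * q ∈ M := fun q => by
    simpa [mul_comm] using nsmul_mem (hgen 4 (by simp)) q
  ext n
  constructor
  · intro hn
    induction hn using AddSubmonoid.closure_induction with
    | mem x hx =>
      simp only [Set.mem_insert_iff, Set.mem_singleton_iff] at hx
      show _ ∨ _
      omega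
    | zero => simp
    | add x y _ _ hx hy =>
      simp only [Set.mem_ofPred_eq] at *
      omega
  · rintro (h | h)
    · simpa [Nat.mul_div_cancel' (Nat.dvd_of_mod_eq_zero h)] using hmul (n / 4)
    · induction n using Nat.strong_induction_on with
      | _ n ih =>
        by_cases hn : n < 4 * k + 4
        · obtain rfl | rfl | rfl | rfl :
              n = 4 * k ∨ n = 4 * k + 1 ∨ n = 4 * k + 2 ∨ n = 4 * k + 3 := by
            omega
          · exact hmul k
          all_goals exact hgen _ (by simp)
        · simpa [Nat.sub_add_cancel (by omega : 4 ≤ n)] using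
            add_mem (ih (n - 4) (by omega) (by omega)) (hgen 4 (by simp))

theorem pseudoFrobeniusSet_four_eq (k : ℕ) (hk : 1 ≤ k) :
    pseudoFrobeniusSet {n | n % 4 = 0 ∨ 4 * k ≤ n} = {4 * k - 3, 4 * k - 2, 4 * k - 1} := by
  ext z
  simp only [pseudoFrobeniusSet, Set.mem_ofPred_eq, Set.mem_insert_iff, Set.mem_singleton_iff]
  constructor
  · rintro ⟨hz, hadd⟩
    have := hadd 4 (by simp) (by simp)
    omega
  · intro hz
    exact ⟨by omega, fun n hn hn0 => by omega⟩

theorem IsRFMatrix.row_add_one_factorization {e : ℕ} {n : Fin e → ℕ} {f : ℤ}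
    {A : Matrix (Fin e) (Fin e) ℤ}
    (h : IsRFMatrix n f A) (i : Fin e) :
    (∀ j, 0 ≤ (A + 1) i j) ∧ f + n i = ∑ j, (A + 1) i j * n j := by
  obtain ⟨hdiag, hnonneg, hrow⟩ := h
  refine ⟨fun j => ?_, ?_⟩
  · by_cases hij : i = j
    · simp [hij, hdiag]
    · simpa [Matrix.one_apply_ne hij] using hnonneg i j hij
  · simp [add_mul, Matrix.one_apply, Finset.sum_add_distrib, ← hrow i]

theorem factorization_cases_of_le {k a b c d t : ℤ} (hk : 0 ≤ k)
    (ha : 0 ≤ a) (hb : 0 ≤ b) (hc : 0 ≤ c) (hd : 0 ≤ d)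
    (h : 4 * a + b * (4 * k + 1) + c * (4 * k + 2) + d * (4 * k + 3) = t)
    (ht : t ≤ 8 * k + 2) :
    (b = 0 ∧ c = 0 ∧ d = 0 ∧ 4 * a = t) ∨
    (b = 1 ∧ c = 0 ∧ d = 0 ∧ 4 * a + 4 * k + 1 = t) ∨
    (b = 0 ∧ c = 1 ∧ d = 0 ∧ 4 * a + 4 * k + 2 = t) ∨
    (b = 0 ∧ c = 0 ∧ d = 1 ∧ 4 * a + 4 * k + 3 = t) ∨
    (b = 2 ∧ c = 0 ∧ d = 0 ∧ 4 * a + 8 * k + 2 = t) := by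
  have hsum : b + c + d ≤ 2 := by nlinarith
  have hb2 : b ≤ 2 := by omega
  have hc2 : c ≤ 2 := by omega
  have hd2 : d ≤ 2 := by omega
  interval_cases b <;> interval_cases c <;> interval_cases d <;> omega

theorem IsRFMatrix.row_cases {k : ℕ} {f : ℤ} {A : Matrix (Fin 4) (Fin 4) ℤ}
    (hk : 1 ≤ k) (h : IsRFMatrix ![4, 4 * k + 1, 4 * k + 2, 4 * k + 3] f A)
    (hf : f ≤ 4 * k - 1) (i : Fin 4) :
    let B := A + 1
    let t := f + (![4, 4 * k + 1, 4 * k + 2, 4 * k + 3] i : ℕ)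
    (B i 1 = 0 ∧ B i 2 = 0 ∧ B i 3 = 0 ∧ 4 * B i 0 = t) ∨
    (B i 1 = 1 ∧ B i 2 = 0 ∧ B i 3 = 0 ∧ 4 * B i 0 + 4 * k + 1 = t) ∨
    (B i 1 = 0 ∧ B i 2 = 1 ∧ B i 3 = 0 ∧ 4 * B i 0 + 4 * k + 2 = t) ∨
    (B i 1 = 0 ∧ B i 2 = 0 ∧ B i 3 = 1 ∧ 4 * B i 0 + 4 * k + 3 = t) ∨
    (B i 1 = 2 ∧ B i 2 = 0 ∧ B i 3 = 0 ∧ 4 * B i 0 + 8 * k + 2 = t) := by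
  intro B t
  obtain ⟨hnonneg, hsum⟩ := h.row_add_one_factorization i
  have ht : t ≤ 8 * k + 2 := by fin_cases i <;> simp [t] <;> omega
  refine factorization_cases_of_le (Int.natCast_nonneg k) (hnonneg 0) (hnonneg 1) (hnonneg 2)
    (hnonneg 3) ?_ ht
  simp only [t, B, hsum, Fin.sum_univ_four, Matrix.add_apply, Matrix.cons_val]
  push_cast
  ring

theorem isRFMatrix_sub_three_iff (k : ℕ) (hk : 1 ≤ k) (A : Matrix (Fin 4) (Fin 4) ℤ) :
    IsRFMatrix ![4, 4 * k + 1, 4 * k + 2, 4 * k + 3] (4 * k - 3) A ↔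
      A = !![-1, 1, 0, 0;
             (k : ℤ) - 1, -1, 1, 0;
             (k : ℤ) - 1, 0, -1, 1;
             2 * (k : ℤ), 0, 0, -1] := by
  constructor
  · intro h
    ext i j
    have hi := h.row_cases hk (by omega) i
    have hii := h.1 i
    fin_cases i <;> fin_cases j <;> simp at hi hii ⊢ <;> omega
  · rintro rfl
    exact ⟨fun i => by fin_cases i <;> rfl,
      fun i j hij => by fin_cases i <;> fin_cases j <;> simp [hk] at hij ⊢,
      fun i => by fin_cases i <;> simp [Fin.sum_univ_four] <;> ring⟩

theorem isRFMatrix_sub_two_iff (k : ℕ) (hk : 1 ≤ k) (A : Matrix (Fin 4) (Fin 4) ℤ) :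
    IsRFMatrix ![4, 4 * k + 1, 4 * k + 2, 4 * k + 3] (4 * k - 2) A ↔
      A = !![-1, 0, 1, 0;
             (k : ℤ) - 1, -1, 0, 1;
             2 * (k : ℤ), 0, -1, 0;
             (k : ℤ), 1, 0, -1] := by
  constructor
  · intro h
    ext i j
    have hi := h.row_cases hk (by omega) i
    have hii := h.1 i
    fin_cases i <;> fin_cases j <;> simp at hi hii ⊢ <;> omega
  · rintro rfl
    exact ⟨fun i => by fin_cases i <;> rfl,
      fun i j hij => by fin_cases i <;> fin_cases j <;> simp [hk] at hij ⊢,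
      fun i => by fin_cases i <;> simp [Fin.sum_univ_four] <;> ring⟩

theorem isRFMatrix_sub_one_iff (k : ℕ) (hk : 1 ≤ k) (A : Matrix (Fin 4) (Fin 4) ℤ) :
    IsRFMatrix ![4, 4 * k + 1, 4 * k + 2, 4 * k + 3] (4 * k - 1) A ↔
      A = !![-1, 0, 0, 1;
             2 * (k : ℤ), -1, 0, 0;
             (k : ℤ), 1, -1, 0;
             (k : ℤ), 0, 1, -1] ∨
      A = !![-1, 0, 0, 1;
             2 * (k : ℤ), -1, 0, 0;
             (k : ℤ), 1, -1, 0;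
             0, 2, 0, -1] := by
  constructor
  · intro h
    have h31 : A 3 1 = 0 ∨ A 3 1 = 2 := by
      have h3 := h.row_cases hk (by omega) 3
      simp at h3
      omega
    refine h31.imp (fun h31 => ?_) (fun h31 => ?_) <;>
    · ext i j
      have hi := h.row_cases hk (by omega) i
      have hii := h.1 i
      fin_cases i <;> fin_cases j <;> simp at hi hii ⊢ <;> omega
  · rintro (rfl | rfl) <;>
    exact ⟨fun i => by fin_cases i <;> rfl,
      fun i j hij => by fin_cases i <;> fin_cases j <;> simp at hij ⊢,
      fun i => by fin_cases i <;> simp [Fin.sum_univ_four] <;> ring⟩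

theorem arf_mult_four_mod_zero_general (S : Set ℕ) (s : ℕ)
    (hs : 4 ≤ s) (hmod : s % 4 = 0)
    (hS : S = (AddSubmonoid.closure ({4, s + 1, s + 2, s + 3} : Set ℕ) : Set ℕ)) :
    pseudoFrobeniusSet S = {s - 3, s - 2, s - 1} ∧
    (∀ A : Matrix (Fin 4) (Fin 4) ℤ,
      IsRFMatrix ![4, s + 1, s + 2, s + 3] ((s : ℤ) - 3) A ↔
        A = !![-1, 1, 0, 0;
               ((s : ℤ) - 4) / 4, -1, 1, 0;
               ((s : ℤ) - 4) / 4, 0, -1, 1;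
               (s : ℤ) / 2, 0, 0, -1]) ∧
    (∀ A : Matrix (Fin 4) (Fin 4) ℤ,
      IsRFMatrix ![4, s + 1, s + 2, s + 3] ((s : ℤ) - 2) A ↔
        A = !![-1, 0, 1, 0;
               ((s : ℤ) - 4) / 4, -1, 0, 1;
               (s : ℤ) / 2, 0, -1, 0;
               (s : ℤ) / 4, 1, 0, -1]) ∧
    (∀ A : Matrix (Fin 4) (Fin 4) ℤ,
      IsRFMatrix ![4, s + 1, s + 2, s + 3] ((s : ℤ) - 1) A ↔
        (A = !![-1, 0, 0, 1;
                (s : ℤ) / 2, -1, 0, 0;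
                (s : ℤ) / 4, 1, -1, 0;
                (s : ℤ) / 4, 0, 1, -1] ∨
         A = !![-1, 0, 0, 1;
                (s : ℤ) / 2, -1, 0, 0;
                (s : ℤ) / 4, 1, -1, 0;
                0, 2, 0, -1])) := by
  obtain ⟨k, rfl⟩ : ∃ k, s = 4 * k := ⟨s / 4, by omega⟩
  have hk : 1 ≤ k := by omega
  have hpred : (((4 * k : ℕ) : ℤ) - 4) / 4 = k - 1 := by omega
  have hhalf : ((4 * k : ℕ) : ℤ) / 2 = 2 * k := by omega
  have hquarter : ((4 * k : ℕ) : ℤ) / 4 = k := by omega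
  subst hS
  simp only [coe_closure_four_eq, hpred, hhalf, hquarter]
  push_cast
  exact ⟨pseudoFrobeniusSet_four_eq k hk, isRFMatrix_sub_three_iff k hk,
    isRFMatrix_sub_two_iff k hk, isRFMatrix_sub_one_iff k hk⟩

/-- Arf numerical semigroup with multiplicity `4`, conductor `s ≥ 4`,
`s ≡ 0 (mod 4)`, of the form `S = ⟨4, s+1, s+2, s+3⟩`: then `PF(S) = {s-3, s-2, s-1}`,
the RF-matrices of `s-3` and `s-2` are unique as displayed, and `s-1` has exactly the
two displayed RF-matrices. -/
theorem arf_mult_four_mod_zero (S : Set ℕ) (s : ℕ)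
    (hNS : IsNumericalSemigroup S) (hArf : IsArf S)
    (hmul : HasMultiplicity S 4) (hcon : HasConductor S s)
    (hs : 4 ≤ s) (hmod : s % 4 = 0)
    (hS : S = (AddSubmonoid.closure ({4, s + 1, s + 2, s + 3} : Set ℕ) : Set ℕ)) :
    pseudoFrobeniusSet S = {s - 3, s - 2, s - 1} ∧
    (∀ A : Matrix (Fin 4) (Fin 4) ℤ,
      IsRFMatrix ![4, s + 1, s + 2, s + 3] ((s : ℤ) - 3) A ↔
        A = !![-1, 1, 0, 0;
               ((s : ℤ) - 4) / 4, -1, 1, 0;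
               ((s : ℤ) - 4) / 4, 0, -1, 1;
               (s : ℤ) / 2, 0, 0, -1]) ∧
    (∀ A : Matrix (Fin 4) (Fin 4) ℤ,
      IsRFMatrix ![4, s + 1, s + 2, s + 3] ((s : ℤ) - 2) A ↔
        A = !![-1, 0, 1, 0;
               ((s : ℤ) - 4) / 4, -1, 0, 1;
               (s : ℤ) / 2, 0, -1, 0;
               (s : ℤ) / 4, 1, 0, -1]) ∧
    (∀ A : Matrix (Fin 4) (Fin 4) ℤ,
      IsRFMatrix ![4, s + 1, s + 2, s + 3] ((s : ℤ) - 1) A ↔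
        (A = !![-1, 0, 0, 1;
                (s : ℤ) / 2, -1, 0, 0;
                (s : ℤ) / 4, 1, -1, 0;
                (s : ℤ) / 4, 0, 1, -1] ∨
         A = !![-1, 0, 0, 1;
                (s : ℤ) / 2, -1, 0, 0;
                (s : ℤ) / 4, 1, -1, 0;
                0, 2, 0, -1])) :=
  arf_mult_four_mod_zero_general S s hs hmod hS
end

section
/- Let S be an Arf numerical semigroup with multiplicity 4 and conductor s > 4 with s ≡ 3 (mod 4). Then S = ⟨4, s, s+2, s+3⟩, PF(S) = {s−4, s−2, s−1}, and the unique RF-matrix of the pseudo-Frobenius number s−4 is the 4×4 matrix with rows (−1, 1, 0, 0), ((s−7)/4, −1, 0, 1), ((s−1)/2, 0, −1, 0), ((s−3)/4, 0, 1, −1). -/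
/-!
Since `4 ∈ S`, every multiple of `4` lies in `S`, and no element of `S` below the conductor `s` is
congruent to `s - 1 ≡ 2 (mod 4)`, for otherwise adding multiples of `4` would put `s - 1` in `S`.
The Arf condition with `x = n - n % 4`, `y = n` puts `n + n % 4` in `S`; for `n % 4` odd this is
`≡ 2 (mod 4)`, so below `s` only multiples of `4` survive: `S = 4ℕ ∪ [s, ∞)`. The generators,
pseudo-Frobenius numbers and the RF-matrix of `s - 4` are read off this description, the last one
because any factorization of a number below `2s` uses at most one of the generators `s, s+2, s+3`.
-/

def IsNumericalSemigroup.toAddSubmonoid {S : Set ℕ} (h : IsNumericalSemigroup S) :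
    AddSubmonoid ℕ where
  carrier := S
  add_mem' ha hb := h.2.1 _ ha _ hb
  zero_mem' := h.1

theorem AddSubmonoid.mem_of_mod_eq (M : AddSubmonoid ℕ) {g a n : ℕ} (hg : g ∈ M) (ha : a ∈ M)
    (hle : g ≤ n) (hmod : n % a = g % a) : n ∈ M := by
  have hdvd : a ∣ n - g := Nat.dvd_of_mod_eq_zero (Nat.sub_mod_eq_zero_of_mod_eq hmod)
  have hn : n = g + ((n - g) / a) • a := by rw [smul_eq_mul, Nat.div_mul_cancel hdvd]; omega
  exact hn ▸ M.add_mem hg (M.nsmul_mem ha _)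

theorem HasConductor.sub_one_notMem {S : Set ℕ} {s : ℕ} (h : HasConductor S s) (hs : 0 < s) :
    s - 1 ∉ S := by
  intro hmem
  have : s ≤ s - 1 := h.2 (s - 1) fun n hn => by
    rcases hn.eq_or_lt with rfl | hlt
    · exact hmem
    · exact h.1 n (by omega)
  omega

theorem IsArf.add_mem_of_sub_mem {S : Set ℕ} (hArf : IsArf S) {y r : ℕ} (hy : y ∈ S)
    (hyr : y - r ∈ S) (hr : r ≤ y) : y + r ∈ S := by
  simpa [show 2 * y - (y - r) = y + r by omega] using hArf _ hyr _ hy (Nat.sub_le y r)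

theorem IsArf.eq_setOf_of_four_mem {S : Set ℕ} {s : ℕ} (hArf : IsArf S)
    (hNS : IsNumericalSemigroup S) (h4 : 4 ∈ S) (hcon : HasConductor S s) (hmod : s % 4 = 3) :
    S = {n | n % 4 = 0 ∨ s ≤ n} := by
  let M := hNS.toAddSubmonoid
  have hdvd : ∀ n, n % 4 = 0 → n ∈ S := fun n hn =>
    M.mem_of_mod_eq M.zero_mem h4 (Nat.zero_le n) (by simpa using hn)
  ext n
  refine ⟨fun hn => ?_, fun hn => hn.elim (hdvd n) (hcon.1 n)⟩
  change n % 4 = 0 ∨ s ≤ n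
  by_contra! hlow
  obtain ⟨m, hm, hms, hm2⟩ : ∃ m ∈ S, m < s ∧ m % 4 = 2 := by
    by_cases h2 : n % 4 = 2
    · exact ⟨n, hn, hlow.2, h2⟩
    · exact ⟨n + n % 4, hArf.add_mem_of_sub_mem hn (hdvd _ (by omega)) (Nat.mod_le n 4),
        by omega, by omega⟩
  exact hcon.sub_one_notMem (by omega) (M.mem_of_mod_eq hm h4 (by omega) (by omega))

theorem closure_four_eq_setOf {s : ℕ} (hmod : s % 4 = 3) :
    (AddSubmonoid.closure {4, s, s + 2, s + 3} : Set ℕ) = {n | n % 4 = 0 ∨ s ≤ n} := by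
  set M := AddSubmonoid.closure ({4, s, s + 2, s + 3} : Set ℕ)
  ext n
  constructor
  · intro hn
    induction hn using AddSubmonoid.closure_induction with
    | mem x hx =>
      simp only [Set.mem_insert_iff, Set.mem_singleton_iff] at hx
      simp only [Set.mem_ofPred_eq]
      omega
    | zero => simp
    | add x y _ _ hx hy =>
      simp only [Set.mem_ofPred_eq] at hx hy ⊢
      omega
  · have h4 : 4 ∈ M := AddSubmonoid.subset_closure (by simp)
    have hgen : ∀ g ∈ ({4, s, s + 2, s + 3} : Set ℕ), g ≤ n → n % 4 = g % 4 → n ∈ M :=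
      fun g hg => M.mem_of_mod_eq (AddSubmonoid.subset_closure hg) h4
    rintro (h0 | hsn)
    · exact M.mem_of_mod_eq M.zero_mem h4 (Nat.zero_le n) (by simpa using h0)
    · rcases (by omega : n % 4 = 0 ∨ n % 4 = 1 ∨ n % 4 = 2 ∨ n % 4 = 3) with h | h | h | h
      · exact hgen 4 (by simp) (by omega) (by omega)
      · exact hgen (s + 2) (by simp) (by omega) (by omega)
      · exact hgen (s + 3) (by simp) (by omega) (by omega)
      · exact hgen s (by simp) (by omega) (by omega)

theorem pseudoFrobeniusSet_setOf_mod_four {s : ℕ} (hs : 4 < s) (hmod : s % 4 = 3) :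
    pseudoFrobeniusSet {n | n % 4 = 0 ∨ s ≤ n} = {s - 4, s - 2, s - 1} := by
  ext z
  simp only [pseudoFrobeniusSet, Set.mem_ofPred_eq, Set.mem_insert_iff, Set.mem_singleton_iff]
  constructor
  · rintro ⟨hz, hadd⟩
    have := hadd 4 (by simp) (by simp)
    omega
  · intro hz
    exact ⟨by omega, fun n hn hn0 => by omega⟩

section RFMatrix

variable {s : ℕ}

theorem add_add_le_one_of_mul_le (hs : 7 ≤ s) {b c d : ℤ} (hc : 0 ≤ c) (hd : 0 ≤ d)
    (h : b * s + c * (s + 2) + d * (s + 3) ≤ 2 * s - 1) : b + c + d ≤ 1 := by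
  by_contra! h2
  nlinarith [mul_nonneg (by linarith : (0 : ℤ) ≤ b + c + d - 2) (by positivity : (0 : ℤ) ≤ s)]

theorem rfRow_zero (hs : 7 ≤ s) (hmod : s % 4 = 3) {b c d : ℤ} (hb : 0 ≤ b) (hc : 0 ≤ c)
    (hd : 0 ≤ d) (h : (s : ℤ) - 4 = -1 * 4 + b * s + c * (s + 2) + d * (s + 3)) :
    b = 1 ∧ c = 0 ∧ d = 0 := by
  have := add_add_le_one_of_mul_le (b := b) hs hc hd (by linarith)
  have : b ≤ 1 := by linarith
  have : c ≤ 1 := by linarith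
  have : d ≤ 1 := by linarith
  interval_cases b <;> interval_cases c <;> interval_cases d <;> omega

theorem rfRow_one (hs : 7 ≤ s) (hmod : s % 4 = 3) {a c d : ℤ} (ha : 0 ≤ a) (hc : 0 ≤ c)
    (hd : 0 ≤ d) (h : (s : ℤ) - 4 = a * 4 + -1 * s + c * (s + 2) + d * (s + 3)) :
    a = (s - 7) / 4 ∧ c = 0 ∧ d = 1 := by
  have := add_add_le_one_of_mul_le (b := 0) hs hc hd (by linarith)
  have : c ≤ 1 := by linarith
  have : d ≤ 1 := by linarith
  interval_cases c <;> interval_cases d <;> omega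

theorem rfRow_two (hs : 7 ≤ s) (hmod : s % 4 = 3) {a b d : ℤ} (ha : 0 ≤ a) (hb : 0 ≤ b)
    (hd : 0 ≤ d) (h : (s : ℤ) - 4 = a * 4 + b * s + -1 * (s + 2) + d * (s + 3)) :
    a = (s - 1) / 2 ∧ b = 0 ∧ d = 0 := by
  have := add_add_le_one_of_mul_le (b := b) hs le_rfl hd (by linarith)
  have : b ≤ 1 := by linarith
  have : d ≤ 1 := by linarith
  interval_cases b <;> interval_cases d <;> omega

theorem rfRow_three (hs : 7 ≤ s) (hmod : s % 4 = 3) {a b c : ℤ} (ha : 0 ≤ a) (hb : 0 ≤ b)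
    (hc : 0 ≤ c) (h : (s : ℤ) - 4 = a * 4 + b * s + c * (s + 2) + -1 * (s + 3)) :
    a = (s - 3) / 4 ∧ b = 0 ∧ c = 1 := by
  have := add_add_le_one_of_mul_le (b := b) hs hc le_rfl (by linarith)
  have : b ≤ 1 := by linarith
  have : c ≤ 1 := by linarith
  interval_cases b <;> interval_cases c <;> omega

theorem isRFMatrix_iff (hs : 7 ≤ s) (hmod : s % 4 = 3) (A : Matrix (Fin 4) (Fin 4) ℤ) :
    IsRFMatrix ![4, s, s + 2, s + 3] ((s : ℤ) - 4) A ↔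
      A = !![-1, 1, 0, 0;
             ((s : ℤ) - 7) / 4, -1, 0, 1;
             ((s : ℤ) - 1) / 2, 0, -1, 0;
             ((s : ℤ) - 3) / 4, 0, 1, -1] := by
  refine ⟨fun ⟨hdiag, hoff, hrow⟩ => ?_, ?_⟩
  · have hrow' : ∀ i,
        (s : ℤ) - 4 = A i 0 * 4 + A i 1 * s + A i 2 * (s + 2) + A i 3 * (s + 3) := fun i => by
      simpa [Fin.sum_univ_four] using hrow i
    have h0 := rfRow_zero hs hmod (hoff 0 1 (by decide)) (hoff 0 2 (by decide))
      (hoff 0 3 (by decide)) (hdiag 0 ▸ hrow' 0)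
    have h1 := rfRow_one hs hmod (hoff 1 0 (by decide)) (hoff 1 2 (by decide))
      (hoff 1 3 (by decide)) (hdiag 1 ▸ hrow' 1)
    have h2 := rfRow_two hs hmod (hoff 2 0 (by decide)) (hoff 2 1 (by decide))
      (hoff 2 3 (by decide)) (hdiag 2 ▸ hrow' 2)
    have h3 := rfRow_three hs hmod (hoff 3 0 (by decide)) (hoff 3 1 (by decide))
      (hoff 3 2 (by decide)) (hdiag 3 ▸ hrow' 3)
    ext i j
    fin_cases i <;> fin_cases j <;> simp [hdiag, h0, h1, h2, h3]
  · rintro rfl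
    refine ⟨fun i => by fin_cases i <;> simp, fun i j hij => ?_, fun i => ?_⟩
    · fin_cases i <;> fin_cases j <;> simp at hij ⊢ <;> omega
    · fin_cases i <;> simp [Fin.sum_univ_four] <;> omega

end RFMatrix

/-- Arf numerical semigroup with multiplicity `4`, conductor `s > 4`,
`s ≡ 3 (mod 4)`: `S = ⟨4, s, s+2, s+3⟩`, `PF(S) = {s-4, s-2, s-1}`, and the unique
RF-matrix of `s-4` is as displayed. -/
theorem arf_mult_four_mod_three (S : Set ℕ) (s : ℕ)
    (hNS : IsNumericalSemigroup S) (hArf : IsArf S)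
    (hmul : HasMultiplicity S 4) (hcon : HasConductor S s)
    (hs : 4 < s) (hmod : s % 4 = 3) :
    S = (AddSubmonoid.closure ({4, s, s + 2, s + 3} : Set ℕ) : Set ℕ) ∧
    pseudoFrobeniusSet S = {s - 4, s - 2, s - 1} ∧
    (∀ A : Matrix (Fin 4) (Fin 4) ℤ,
      IsRFMatrix ![4, s, s + 2, s + 3] ((s : ℤ) - 4) A ↔
        A = !![-1, 1, 0, 0;
               ((s : ℤ) - 7) / 4, -1, 0, 1;
               ((s : ℤ) - 1) / 2, 0, -1, 0;
               ((s : ℤ) - 3) / 4, 0, 1, -1]) := by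
  have hS := hArf.eq_setOf_of_four_mem hNS hmul.1 hcon hmod
  exact ⟨hS.trans (closure_four_eq_setOf hmod).symm,
    hS ▸ pseudoFrobeniusSet_setOf_mod_four hs hmod, isRFMatrix_iff (by omega) hmod⟩
end
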